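/- Let k be a finite field with q elements, K = F_{q^d} ⊆ k̄ the degree-d extension of k in an algebraic closure k̄, u_1,…,u_d a basis of K over k, and σ the q-power Frobenius automorphism of k̄. Let α ∈ k̄ and let β ∈ k̄^d be the descent of α, i.e. the unique vector satisfying Σ_{j=1}^d β_j·σ^i(u_j) = σ^i(α) for all i = 0,…,d−1. Then α ∈ K if and only if β ∈ k^d; and in that case β = (a_1,…,a_d) is the coordinate vector of α, i.e. α = Σ_{j=1}^d a_j u_j with a_j ∈ k. -/

import Mathlib

/-!
The `d` embeddings `x ↦ σ^i x` of `K` into `k̄` are the distinct `k`-algebra maps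
`x ↦ x^(q^i)` (the Frobenius of `K/k` has order `d`). By Dedekind's lemma they are linearly
independent over `k̄`, so the matrix `(σ^i u_j)` is invertible and the descent system has at most
one solution. For `α ∈ K` the coordinate vector of `α` solves it, since each `σ^i` fixes `k`;
conversely the row `i = 0` of the system exhibits `α` as a `k`-combination of the `u_j`.
-/

open Module

namespace Module.Basis

variable {ι k K L : Type*} [Fintype ι] [Field k] [Ring K] [Algebra k K]
  [Field L] [Algebra k L]

theorem sum_repr_mul_algHom (u : Basis ι k K) (χ : K →ₐ[k] L) (x : K) :
    ∑ j, algebraMap k L (u.repr x j) * χ (u j) = χ x := by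
  conv_rhs => rw [← u.sum_repr x]
  rw [map_sum]
  exact Finset.sum_congr rfl fun j _ => by rw [map_smul, Algebra.smul_def]

theorem isUnit_matrix_algHom_apply [DecidableEq ι] (u : Basis ι k K)
    (χ : ι → K →ₐ[k] L) (hχ : Function.Injective χ) :
    IsUnit (Matrix.of fun i j => χ i (u j)) := by
  rw [← Matrix.linearIndependent_rows_iff_isUnit, Fintype.linearIndependent_iff]
  intro c hc
  have hmaps : ∑ i, c i • (χ i).toLinearMap = 0 := u.ext fun j => by
    simpa [Finset.sum_apply, smul_eq_mul] using congr_fun hc j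
  exact Fintype.linearIndependent_iff.mp
    ((linearIndependent_toLinearMap k K L).comp χ hχ) c hmaps

theorem eq_of_sum_mul_algHom_apply_eq [DecidableEq ι] (u : Basis ι k K)
    (χ : ι → K →ₐ[k] L) (hχ : Function.Injective χ) {β γ : ι → L}
    (h : ∀ i, ∑ j, β j * χ i (u j) = ∑ j, γ j * χ i (u j)) : β = γ := by
  refine Matrix.mulVec_injective_iff_isUnit.mpr (u.isUnit_matrix_algHom_apply χ hχ) ?_
  ext i
  simpa [Matrix.mulVec, dotProduct, mul_comm] using h i

end Module.Basis

theorem RingAut.pow_apply_eq_pow_pow {R : Type*} [Semiring R] (σ : RingAut R) {p : ℕ}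
    (hσ : ∀ x, σ x = x ^ p) (n : ℕ) (x : R) : (σ ^ n) x = x ^ p ^ n := by
  rw [RingAut.coe_pow, show ⇑σ = (· ^ p) from funext hσ, pow_iterate]

theorem FiniteField.frobeniusAlgHom_pow_apply (k : Type*) {R : Type*} [Field k] [Fintype k]
    [CommRing R] [Algebra k R] (n : ℕ) (x : R) :
    (frobeniusAlgHom k R ^ n) x = x ^ Fintype.card k ^ n := by
  rw [AlgHom.coe_pow, coe_frobeniusAlgHom, pow_iterate]

theorem FiniteField.frobeniusAlgHom_pow_injective (k : Type*) {K : Type*} [Field k] [Fintype k]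
    [Field K] [Algebra k K] [Finite K] :
    Function.Injective fun i : Fin (finrank k K) => frobeniusAlgHom k K ^ (i : ℕ) := by
  intro i j hij
  refine Fin.ext (pow_injOn_Iio_orderOf ?_ ?_ hij) <;>
    simp [orderOf_frobeniusAlgHom]

theorem stmt_15_general {k K kbar : Type*} [Field k] [Fintype k] [Field K] [Field kbar]
    [Algebra k K] [Algebra K kbar] [Algebra k kbar] [IsScalarTower k K kbar]
    (σ : RingAut kbar) (hσ : ∀ x : kbar, σ x = x ^ Fintype.card k)
    (d : ℕ) (u : Module.Basis (Fin d) k K)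
    (α : kbar) (β : Fin d → kbar)
    (hβ : ∀ i : Fin d,
      ∑ j : Fin d, β j * (σ ^ (i : ℕ)) (algebraMap K kbar (u j)) = (σ ^ (i : ℕ)) α) :
    ((∃ a : K, algebraMap K kbar a = α) ↔ ∀ j : Fin d, ∃ c : k, algebraMap k kbar c = β j)
    ∧ ∀ a : K, algebraMap K kbar a = α →
        ∀ j : Fin d, β j = algebraMap k kbar (u.repr a j) := by
  have := Module.Finite.of_basis u
  have : Finite K := Module.finite_of_finite k
  have hd : finrank k K = d := by rw [finrank_eq_card_basis u, Fintype.card_fin]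
  let χ : Fin d → K →ₐ[k] kbar := fun i =>
    (IsScalarTower.toAlgHom k K kbar).comp (FiniteField.frobeniusAlgHom k K ^ (i : ℕ))
  have hσχ (i : Fin d) (x : K) : (σ ^ (i : ℕ)) (algebraMap K kbar x) = χ i x := by
    simp only [σ.pow_apply_eq_pow_pow hσ, χ, AlgHom.comp_apply,
      FiniteField.frobeniusAlgHom_pow_apply, IsScalarTower.coe_toAlgHom', map_pow]
  have hχ : Function.Injective χ := by
    subst hd
    intro i j hij
    exact FiniteField.frobeniusAlgHom_pow_injective k <|
      AlgHom.ext fun x => (algebraMap K kbar).injective (AlgHom.congr_fun hij x)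
  have hcoord (a : K) (ha : algebraMap K kbar a = α) :
      β = fun j => algebraMap k kbar (u.repr a j) :=
    u.eq_of_sum_mul_algHom_apply_eq χ hχ fun i => by
      rw [u.sum_repr_mul_algHom, ← hσχ, ha, ← hβ]
      simp only [hσχ]
  refine ⟨⟨fun ⟨a, ha⟩ j => ⟨_, (congr_fun (hcoord a ha) j).symm⟩, fun hk => ?_⟩,
    fun a ha => congr_fun (hcoord a ha)⟩
  choose c hc using hk
  have : NeZero d := ⟨fun h => by subst h; exact u.index_nonempty.elim Fin.elim0⟩
  refine ⟨∑ j, c j • u j, ?_⟩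
  simpa [← hc, Algebra.smul_def, ← IsScalarTower.algebraMap_apply] using hβ 0

/-- Let `β ∈ k̄^d` be the descent of `α ∈ k̄`. Then `α ∈ K` iff
`β ∈ k^d`, and in that case `β` is the coordinate vector of `α` in the basis `u`. -/
theorem stmt_15 {k K kbar : Type*} [Field k] [Fintype k] [Field K] [Field kbar]
    [Algebra k K] [Algebra K kbar] [Algebra k kbar] [IsScalarTower k K kbar]
    [IsAlgClosure k kbar]
    (σ : RingAut kbar) (hσ : ∀ x : kbar, σ x = x ^ Fintype.card k)
    (d : ℕ) (u : Module.Basis (Fin d) k K)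
    (α : kbar) (β : Fin d → kbar)
    (hβ : ∀ i : Fin d,
      ∑ j : Fin d, β j * (σ ^ (i : ℕ)) (algebraMap K kbar (u j)) = (σ ^ (i : ℕ)) α) :
    ((∃ a : K, algebraMap K kbar a = α) ↔ ∀ j : Fin d, ∃ c : k, algebraMap k kbar c = β j)
    ∧ ∀ a : K, algebraMap K kbar a = α →
        ∀ j : Fin d, β j = algebraMap k kbar (u.repr a j) :=
  stmt_15_general σ hσ d u α β hβ
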